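/- arXiv:1711.03315 — 2 statements merged into one kernel-verified Lean document; each statement's English description precedes it below -/
import Mathlib

section
/- Let T ⊆ ℝⁿ × ℝ and T_m ⊆ ℝⁿ × ℝ (m ∈ ℕ) be cones, i.e., sets closed under multiplication by positive scalars. If T is contained in the Kuratowski lower limit of the sequence (T_m), then T ∩ (ℝⁿ × {1}) is contained in the Kuratowski lower limit of the sequence (T_m ∩ (ℝⁿ × {1})). -/
open Set Filter Metric Topology

noncomputable section

/-- `ℝⁿ` with the Euclidean norm. -/
abbrev En (n : ℕ) := EuclideanSpace ℝ (Fin n)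

/-- `ℝⁿ × ℝ` with the Euclidean (L²) norm. -/
abbrev Yn (n : ℕ) := WithLp 2 (En n × ℝ)

/-- The last ("time") coordinate of an element of `ℝⁿ × ℝ`. -/
def tY {n : ℕ} (y : Yn n) : ℝ := ((WithLp.equiv 2 (En n × ℝ)) y).2

/-- The hyperplane `ℝⁿ × {1}`. -/
def sliceOne (n : ℕ) : Set (Yn n) := {y | tY y = 1}

/-- A set is a cone if it is closed under multiplication by positive scalars. -/
def IsCone {X : Type*} [SMul ℝ X] (A : Set X) : Prop :=
  ∀ a ∈ A, ∀ l : ℝ, 0 < l → l • a ∈ A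

/-- Kuratowski lower limit of a sequence of sets: points `x` admitting `x m ∈ A m` for all
sufficiently large `m` with `x m → x`. -/
def kuratowskiLiminf {X : Type*} [TopologicalSpace X] (A : ℕ → Set X) : Set X :=
  {x | ∃ xs : ℕ → X, (∀ᶠ m in atTop, xs m ∈ A m) ∧ Tendsto xs atTop (𝓝 x)}

/-!
Take `x_m ∈ T_m` with `x_m → y`. Since the last coordinate of `y` is `1`, that of `x_m` is
eventually positive and tends to `1`; dividing `x_m` by it gives points of the cone `T_m` on the
slice `ℝⁿ × {1}`, and these still converge to `1⁻¹ • y = y`.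
-/

section Homogeneous

variable {X : Type*} {f : X → ℝ}

lemma IsCone.inv_smul_mem_inter_preimage_one [SMul ℝ X]
    (hf : ∀ (l : ℝ) x, f (l • x) = l * f x) {A : Set X} (hA : IsCone A) {a : X} (ha : a ∈ A)
    (hfa : 0 < f a) : (f a)⁻¹ • a ∈ A ∩ f ⁻¹' {1} :=
  ⟨hA a ha _ (inv_pos.2 hfa), by simp [hf, inv_mul_cancel₀ hfa.ne']⟩

lemma mem_kuratowskiLiminf_inter_preimage_one [SeminormedAddCommGroup X] [NormedSpace ℝ X]
    (hf_cont : Continuous f) (hf : ∀ (l : ℝ) x, f (l • x) = l * f x)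
    {A : ℕ → Set X} (hA : ∀ m, IsCone (A m)) {y : X} (hy : y ∈ kuratowskiLiminf A)
    (hfy : f y = 1) : y ∈ kuratowskiLiminf (fun m => A m ∩ f ⁻¹' {1}) := by
  obtain ⟨xs, hxs_mem, hxs_lim⟩ := hy
  have hf_lim : Tendsto (fun m => f (xs m)) atTop (𝓝 1) :=
    hfy ▸ (hf_cont.tendsto y).comp hxs_lim
  have hf_pos : ∀ᶠ m in atTop, 0 < f (xs m) := hf_lim.eventually (eventually_gt_nhds one_pos)
  refine ⟨fun m => (f (xs m))⁻¹ • xs m, ?_, ?_⟩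
  · filter_upwards [hxs_mem, hf_pos] with m hm hpos
    exact (hA m).inv_smul_mem_inter_preimage_one hf hm hpos
  · simpa using (hf_lim.inv₀ one_ne_zero).smul hxs_lim

end Homogeneous

lemma tY_smul {n : ℕ} (l : ℝ) (y : Yn n) : tY (l • y) = l * tY y := rfl

lemma continuous_tY {n : ℕ} : Continuous (tY (n := n)) :=
  continuous_snd.comp (WithLp.prod_continuous_ofLp 2 (En n) ℝ)

theorem statement3_general (n : ℕ) (T : Set (Yn n)) (Tm : ℕ → Set (Yn n))
    (hTm : ∀ m, IsCone (Tm m))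
    (h : T ⊆ kuratowskiLiminf Tm) :
    T ∩ sliceOne n ⊆ kuratowskiLiminf (fun m => Tm m ∩ sliceOne n) :=
  fun _ ⟨hyT, hy1⟩ =>
    mem_kuratowskiLiminf_inter_preimage_one continuous_tY tY_smul hTm (h hyT) hy1

/-- If the cone `T` lies in the Kuratowski lower limit of the cones `T_m`,
then `T ∩ (ℝⁿ × {1})` lies in the Kuratowski lower limit of the sets `T_m ∩ (ℝⁿ × {1})`. -/
theorem statement3 (n : ℕ) (T : Set (Yn n)) (Tm : ℕ → Set (Yn n))
    (hT : IsCone T) (hTm : ∀ m, IsCone (Tm m))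
    (h : T ⊆ kuratowskiLiminf Tm) :
    T ∩ sliceOne n ⊆ kuratowskiLiminf (fun m => Tm m ∩ sliceOne n) :=
  statement3_general n T Tm hTm h
end
end

section
/- Let C₀ ⊆ ℝⁿ be closed, d ∈ ℝⁿ, T > 0, and K := {(x,t) ∈ ℝⁿ × ℝ : t ∈ [0,T], x + t·d ∈ C₀}. Let χ ∈ C₀, t ∈ (0,T), and x := χ − t·d, so that y := (x,t) ∈ K. If w' belongs to the metric projection of d onto T_{C₀}(χ), then (w' − d, 1) belongs to the metric projection of the vector (0_{ℝⁿ}, 1) onto T_K(y) ∩ (ℝⁿ × {1}). -/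
open Set Filter Metric MeasureTheory Topology

noncomputable section

/-- The Bouligand tangent cone to `K` at `y`: vectors `v` for which there are sequences
`t k → 0⁺` and `w k → v` with `y + t k • w k ∈ K`. -/
def bouligandTangentCone {X : Type*} [NormedAddCommGroup X] [NormedSpace ℝ X]
    (K : Set X) (y : X) : Set X :=
  {v | ∃ t : ℕ → ℝ, ∃ w : ℕ → X,
    (∀ k, 0 < t k) ∧ Tendsto t atTop (𝓝 0) ∧ Tendsto w atTop (𝓝 v) ∧
    ∀ k, y + t k • w k ∈ K}

/-- Proximal normals: `ζ` with `dist (y + t • ζ) K = t * ‖ζ‖` for some `t > 0`. -/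
def proxNormalCone {X : Type*} [NormedAddCommGroup X] [NormedSpace ℝ X]
    (K : Set X) (y : X) : Set X :=
  {ζ | ∃ t : ℝ, 0 < t ∧ infDist (y + t • ζ) K = t * ‖ζ‖}

/-- The cone of limiting normals: limits of proximal normals at nearby points of `K`. -/
def limitingNormalCone {X : Type*} [NormedAddCommGroup X] [NormedSpace ℝ X]
    (K : Set X) (y : X) : Set X :=
  {ζ | ∃ yk : ℕ → X, ∃ ζk : ℕ → X,
    (∀ k, yk k ∈ K) ∧ (∀ k, ζk k ∈ proxNormalCone K (yk k)) ∧
    Tendsto yk atTop (𝓝 y) ∧ Tendsto ζk atTop (𝓝 ζ)}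

/-- Metric projection of `d` onto `A`. -/
def metricProj {X : Type*} [NormedAddCommGroup X] (A : Set X) (d : X) : Set X :=
  {a ∈ A | ‖d - a‖ = infDist d A}

/-- The pair `(x, t)` as an element of `ℝⁿ × ℝ`. -/
def toY {n : ℕ} (x : En n) (t : ℝ) : Yn n := (WithLp.equiv 2 (En n × ℝ)).symm (x, t)

/-- `Pr : ℝⁿ × ℝ → ℝⁿ`, projection on the first `n` coordinates. -/
def PrY {n : ℕ} (y : Yn n) : En n := ((WithLp.equiv 2 (En n × ℝ)) y).1

/-!
The map `u ↦ (u - d, 1)` is an isometry of `ℝⁿ` onto the slice `ℝⁿ × {1}` sending `d` to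
`(0, 1)`, and it carries `T_{C₀}(χ)` onto `T_K(x, t) ∩ (ℝⁿ × {1})`: the linear map
`(v, τ) ↦ v + τ • d` sends `(x, t)` to `χ` and tangent directions of `K` to those of `C₀`,
and conversely, since `0 < t < T`, the constraint `t ∈ [0, T]` is inactive along short steps.
Isometries carry metric projections to metric projections.
-/

section TangentCone

variable {E X : Type*} [NormedAddCommGroup E] [NormedSpace ℝ E]
  [NormedAddCommGroup X] [NormedSpace ℝ X]

lemma mem_bouligandTangentCone_of_eventually {K : Set X} {y v : X} {t : ℕ → ℝ} {w : ℕ → X}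
    (ht : ∀ k, 0 < t k) (ht0 : Tendsto t atTop (𝓝 0)) (hw : Tendsto w atTop (𝓝 v))
    (hK : ∀ᶠ k in atTop, y + t k • w k ∈ K) : v ∈ bouligandTangentCone K y := by
  obtain ⟨N, hN⟩ := eventually_atTop.mp hK
  exact ⟨fun k => t (k + N), fun k => w (k + N), fun k => ht _,
    ht0.comp (tendsto_add_atTop_nat N), hw.comp (tendsto_add_atTop_nat N),
    fun k => hN _ (Nat.le_add_left N k)⟩

lemma ContinuousLinearMap.mapsTo_bouligandTangentCone {C : Set E} {K : Set X} (f : X →L[ℝ] E)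
    (hf : MapsTo f K C) (y : X) :
    MapsTo f (bouligandTangentCone K y) (bouligandTangentCone C (f y)) := by
  rintro v ⟨t, w, ht, ht0, hw, hK⟩
  refine ⟨t, fun k => f (w k), ht, ht0, (f.continuous.tendsto v).comp hw, fun k => ?_⟩
  simpa using hf (hK k)

lemma mapsTo_bouligandTangentCone_of_forall_small_step {C : Set E} {K : Set X} {x : E} {y : X}
    {g : E → X} (hg : Continuous g)
    (hstep : ∀ᶠ s in 𝓝[>] (0 : ℝ), ∀ w, x + s • w ∈ C → y + s • g w ∈ K) :
    MapsTo g (bouligandTangentCone C x) (bouligandTangentCone K y) := by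
  rintro u ⟨t, w, ht, ht0, hw, hC⟩
  have ht0' : Tendsto t atTop (𝓝[>] 0) :=
    tendsto_nhdsWithin_iff.mpr ⟨ht0, Eventually.of_forall ht⟩
  refine mem_bouligandTangentCone_of_eventually ht ht0 ((hg.tendsto u).comp hw) ?_
  filter_upwards [ht0'.eventually hstep] with k hk
  exact hk _ (hC k)

end TangentCone

lemma Isometry.mem_metricProj_image {X Y : Type*} [NormedAddCommGroup X] [NormedAddCommGroup Y]
    {Φ : X → Y} (hΦ : Isometry Φ) {A : Set X} {d a : X} (ha : a ∈ metricProj A d) :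
    Φ a ∈ metricProj (Φ '' A) (Φ d) := by
  refine ⟨mem_image_of_mem Φ ha.1, ?_⟩
  rw [← dist_eq_norm, hΦ.dist_eq, infDist_image hΦ, dist_eq_norm, ha.2]

section Slice

variable {n : ℕ}

@[simp] lemma PrY_toY (a : En n) (s : ℝ) : PrY (toY a s) = a := rfl

@[simp] lemma tY_toY (a : En n) (s : ℝ) : tY (toY a s) = s := rfl

lemma toY_add_smul_toY (a b : En n) (s r c : ℝ) :
    toY a s + c • toY b r = toY (a + c • b) (s + c * r) := rfl

lemma toY_PrY_tY (v : Yn n) : toY (PrY v) (tY v) = v := rfl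

lemma norm_toY_sub_toY (a b : En n) (s : ℝ) : ‖toY a s - toY b s‖ = ‖a - b‖ := by
  rw [WithLp.prod_norm_eq_of_L2]
  simp [toY]

def sliceEmbedding (d : En n) (u : En n) : Yn n := toY (u - d) 1

lemma isometry_sliceEmbedding (d : En n) : Isometry (sliceEmbedding d) :=
  Isometry.of_dist_eq fun a b => by
    rw [dist_eq_norm, dist_eq_norm, sliceEmbedding, sliceEmbedding, norm_toY_sub_toY,
      sub_sub_sub_cancel_right]

def shiftAlong (d : En n) : Yn n →L[ℝ] En n :=
  (ContinuousLinearMap.fst ℝ (En n) ℝ + (ContinuousLinearMap.snd ℝ (En n) ℝ).smulRight d) ∘L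
    (WithLp.prodContinuousLinearEquiv 2 ℝ (En n) ℝ : Yn n →L[ℝ] En n × ℝ)

lemma shiftAlong_apply (d : En n) (v : Yn n) : shiftAlong d v = PrY v + tY v • d := rfl

lemma bouligandTangentCone_inter_sliceOne {C₀ : Set (En n)} {d χ : En n} {T t : ℝ}
    (ht : t ∈ Ioo 0 T) :
    bouligandTangentCone {y | tY y ∈ Icc 0 T ∧ PrY y + tY y • d ∈ C₀} (toY (χ - t • d) t) ∩
      sliceOne n = sliceEmbedding d '' bouligandTangentCone C₀ χ := by
  apply Subset.antisymm
  · rintro v ⟨hv, hv1 : tY v = 1⟩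
    have hχ : shiftAlong d (toY (χ - t • d) t) = χ := by simp [shiftAlong_apply]
    refine ⟨shiftAlong d v,
      hχ ▸ (shiftAlong d).mapsTo_bouligandTangentCone (fun y hy => hy.2) _ hv, ?_⟩
    rw [sliceEmbedding, shiftAlong_apply, hv1, one_smul, add_sub_cancel_right, ← hv1, toY_PrY_tY]
  · rintro _ ⟨u, hu, rfl⟩
    refine ⟨mapsTo_bouligandTangentCone_of_forall_small_step
      (isometry_sliceEmbedding d).continuous ?_ hu, rfl⟩
    filter_upwards [Ioo_mem_nhdsGT (sub_pos.2 ht.2)] with s hs w hw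
    rw [sliceEmbedding, toY_add_smul_toY]
    refine ⟨⟨?_, ?_⟩, ?_⟩ <;> simp only [PrY_toY, tY_toY]
    · linarith [ht.1, hs.1]
    · linarith [hs.2]
    · convert hw using 1
      module

end Slice

theorem statement9_general (n : ℕ) (C₀ : Set (En n)) (d : En n) (T : ℝ)
    (K : Set (Yn n))
    (hK : K = {y | tY y ∈ Icc (0:ℝ) T ∧ PrY y + tY y • d ∈ C₀})
    (χ : En n) (t : ℝ) (ht : t ∈ Ioo (0:ℝ) T)
    (x : En n) (hx : x = χ - t • d)
    (w' : En n) (hw' : w' ∈ metricProj (bouligandTangentCone C₀ χ) d) :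
    toY (w' - d) 1 ∈
      metricProj (bouligandTangentCone K (toY x t) ∩ sliceOne n) (toY 0 1) := by
  subst hK hx
  rw [bouligandTangentCone_inter_sliceOne ht,
    show toY 0 1 = sliceEmbedding d d by rw [sliceEmbedding, sub_self]]
  exact (isometry_sliceEmbedding d).mem_metricProj_image hw'

/-- For `K = {(x,t) : t ∈ [0,T], x + t·d ∈ C₀}`, `χ ∈ C₀`, `t ∈ (0,T)` and
`x := χ - t·d`: if `w'` is in the metric projection of `d` onto `T_{C₀}(χ)`, then
`(w' - d, 1)` is in the metric projection of `(0,1)` onto `T_K(x,t) ∩ (ℝⁿ × {1})`. -/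
theorem statement9 (n : ℕ) (C₀ : Set (En n)) (hC₀ : IsClosed C₀) (d : En n) (T : ℝ)
    (hT : 0 < T) (K : Set (Yn n))
    (hK : K = {y | tY y ∈ Icc (0:ℝ) T ∧ PrY y + tY y • d ∈ C₀})
    (χ : En n) (hχ : χ ∈ C₀) (t : ℝ) (ht : t ∈ Ioo (0:ℝ) T)
    (x : En n) (hx : x = χ - t • d)
    (w' : En n) (hw' : w' ∈ metricProj (bouligandTangentCone C₀ χ) d) :
    toY (w' - d) 1 ∈
      metricProj (bouligandTangentCone K (toY x t) ∩ sliceOne n) (toY 0 1) :=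
  statement9_general n C₀ d T K hK χ t ht x hx w' hw'
end
end
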